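/- arXiv:0904.0133 — 4 statements merged into one kernel-verified Lean document; each statement's English description precedes it below -/
import Mathlib

section
/- For every natural number n, the set of fixed points of the map T_n : ℂ^n → ℂ^n defined by (T_n(x))_j = (-1)^j σ_j(x_1,…,x_n) (where σ_j is the j-th elementary symmetric function) is finite. Equivalently, for each degree n there exist only finitely many Ulam polynomials of degree n. -/
open Finset Polynomial

namespace UlamAux

variable {n : ℕ} (S : Set (Fin n → ℂ))

/-- coordinate functions on `S` -/
noncomputable def u (i : Fin n) : (↥S) → ℂ := fun p => (p : Fin n → ℂ) i

/-- monomial functions -/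
noncomputable def mon (k : Fin n → ℕ) : (↥S) → ℂ := ∏ i, u S i ^ k i

/-- span of monomials of degree at most `d` -/
noncomputable def V (d : ℕ) : Submodule ℂ ((↥S) → ℂ) :=
  Submodule.span ℂ (mon S '' {k | ∑ i, k i ≤ d})

lemma mon_mem {k : Fin n → ℕ} {d : ℕ} (h : ∑ i, k i ≤ d) : mon S k ∈ V S d :=
  Submodule.subset_span ⟨k, h, rfl⟩

lemma V_mono {d e : ℕ} (h : d ≤ e) : V S d ≤ V S e :=
  Submodule.span_mono (Set.image_mono fun _ hk => le_trans hk h)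

lemma mon_add (a b : Fin n → ℕ) :
    mon S (fun t => a t + b t) = mon S a * mon S b := by
  unfold mon
  simp [pow_add, Finset.prod_mul_distrib]

lemma pow_eq_mon (i : Fin n) (m : ℕ) :
    u S i ^ m = mon S (fun t => if t = i then m else 0) := by
  unfold mon
  rw [Finset.prod_eq_single i]
  · simp
  · intro b _ hb; simp [hb]
  · simp

lemma mul_mem_V {k : Fin n → ℕ} {d e : ℕ} (hk : ∑ i, k i ≤ e) {f : (↥S) → ℂ}
    (hf : f ∈ V S d) : mon S k * f ∈ V S (d + e) := by
  induction hf using Submodule.span_induction with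
  | mem g hg =>
    obtain ⟨k', hk', rfl⟩ := hg
    have : mon S k * mon S k' = mon S (fun t => k' t + k t) := by
      rw [mon_add]; ring
    rw [this]
    exact mon_mem S (by
      rw [Finset.sum_add_distrib]
      exact add_le_add hk' hk)
  | zero => simpa using (V S (d + e)).zero_mem
  | add g h _ _ hg hh => rw [mul_add]; exact (V S (d + e)).add_mem hg hh
  | smul c g _ hg => rw [mul_smul_comm]; exact (V S (d + e)).smul_mem c hg

lemma pow_mem {i : Fin n} {m d : ℕ} (h : m ≤ d) : u S i ^ m ∈ V S d := by
  rw [pow_eq_mon]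
  exact mon_mem S (by simpa using h)

lemma pow_mul_mem {i : Fin n} {m d e : ℕ} (hm : m ≤ e) {f : (↥S) → ℂ}
    (hf : f ∈ V S d) : u S i ^ m * f ∈ V S (d + e) := by
  rw [pow_eq_mon]
  exact mul_mem_V S (by simpa using hm) hf

lemma neg_pow_mul_mem {k : ℕ} {g : (↥S) → ℂ} {W : Submodule ℂ ((↥S) → ℂ)}
    (hg : g ∈ W) : (-1 : (↥S) → ℂ) ^ k * g ∈ W := by
  rcases Nat.even_or_odd k with h | h
  · rw [h.neg_one_pow, one_mul]; exact hg
  · rw [h.neg_one_pow, neg_one_mul]; exact W.neg_mem hg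

section Main

variable (hn : 0 < n)
  (H : ∀ i : Fin n,
    u S i ^ n + ∑ j : Fin n, u S j * u S i ^ (n - ((j : ℕ) + 1)) = 0)

include hn H

lemma r1 (i : Fin n) :
    u S i ^ n + u S ⟨0, hn⟩ * u S i ^ (n - 1) ∈ V S (n - 1) := by
  have h := H i
  rw [← Finset.sum_erase_add _ _ (Finset.mem_univ (⟨0, hn⟩ : Fin n))] at h
  have key : u S i ^ n + u S ⟨0, hn⟩ * u S i ^ (n - 1) =
      -∑ j ∈ Finset.univ.erase (⟨0, hn⟩ : Fin n),
        u S j * u S i ^ (n - ((j : ℕ) + 1)) := by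
    have : ((⟨0, hn⟩ : Fin n) : ℕ) + 1 = 1 := rfl
    rw [this] at h
    linear_combination h
  rw [key]
  refine (V S (n - 1)).neg_mem (Submodule.sum_mem _ fun j hj => ?_)
  have hj0 : 1 ≤ (j : ℕ) := by
    rcases Finset.mem_erase.mp hj with ⟨hne, _⟩
    rcases Nat.eq_zero_or_pos (j : ℕ) with h' | h'
    · exact absurd (Fin.ext h') hne
    · exact h'
  have hdeg : 1 + (n - ((j : ℕ) + 1)) ≤ n - 1 := by
    have := j.isLt
    omega
  have : u S j * u S i ^ (n - ((j : ℕ) + 1)) =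
      u S j ^ 1 * u S i ^ (n - ((j : ℕ) + 1)) := by ring
  rw [this]
  have hmm : u S j ^ 1 * u S i ^ (n - ((j : ℕ) + 1)) ∈
      V S ((n - ((j : ℕ) + 1)) + 1) :=
    pow_mul_mem S le_rfl (pow_mem S le_rfl)
  exact V_mono S (by omega) hmm

lemma r2 : u S ⟨0, hn⟩ ^ n ∈ V S (n - 1) := by
  have h := r1 S hn H ⟨0, hn⟩
  have e1 : u S ⟨0, hn⟩ * u S ⟨0, hn⟩ ^ (n - 1) = u S ⟨0, hn⟩ ^ n := by
    rw [← pow_succ']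
    congr 1
    omega
  rw [e1] at h
  have : u S ⟨0, hn⟩ ^ n = ((2 : ℂ)⁻¹) • (u S ⟨0, hn⟩ ^ n + u S ⟨0, hn⟩ ^ n) := by
    rw [← two_smul ℂ, smul_smul]
    norm_num
  rw [this]
  exact (V S (n - 1)).smul_mem _ h

lemma r3 (i : Fin n) : ∀ k : ℕ,
    u S i ^ (n + k) + (-1 : (↥S) → ℂ) ^ k *
      (u S ⟨0, hn⟩ ^ (k + 1) * u S i ^ (n - 1)) ∈ V S (n + k - 1) := by
  have e1 : u S i ^ n = u S i * u S i ^ (n - 1) := by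
    rw [← pow_succ']
    congr 1
    omega
  intro k
  induction k with
  | zero =>
    have : u S i ^ (n + 0) + (-1 : (↥S) → ℂ) ^ 0 *
        (u S ⟨0, hn⟩ ^ (0 + 1) * u S i ^ (n - 1)) =
        u S i ^ n + u S ⟨0, hn⟩ * u S i ^ (n - 1) := by ring_nf
    rw [this]
    exact V_mono S (by omega) (r1 S hn H i)
  | succ k ih =>
    have key : u S i ^ (n + (k + 1)) + (-1 : (↥S) → ℂ) ^ (k + 1) *
        (u S ⟨0, hn⟩ ^ (k + 1 + 1) * u S i ^ (n - 1)) =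
        u S i ^ 1 * (u S i ^ (n + k) + (-1 : (↥S) → ℂ) ^ k *
          (u S ⟨0, hn⟩ ^ (k + 1) * u S i ^ (n - 1)))
        - (-1 : (↥S) → ℂ) ^ k * (u S ⟨0, hn⟩ ^ (k + 1) *
          (u S i ^ n + u S ⟨0, hn⟩ * u S i ^ (n - 1))) := by
      rw [e1]
      ring
    rw [key]
    refine Submodule.sub_mem _ ?_ ?_
    · have h := pow_mul_mem S (i := i) (le_rfl : 1 ≤ 1) ih
      have : n + k - 1 + 1 = n + (k + 1) - 1 := by omega
      rw [this] at h
      exact h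
    · refine neg_pow_mul_mem S ?_
      have h := pow_mul_mem S (i := ⟨0, hn⟩) (le_rfl : k + 1 ≤ k + 1) (r1 S hn H i)
      have : n - 1 + (k + 1) = n + (k + 1) - 1 := by omega
      rw [this] at h
      exact h

lemma r4 (i : Fin n) : u S i ^ (2 * n - 1) ∈ V S (2 * n - 2) := by
  have h := r3 S hn H i (n - 1)
  have e2 : n + (n - 1) = 2 * n - 1 := by omega
  have e3 : n - 1 + 1 = n := by omega
  have e4 : n + (n - 1) - 1 = 2 * n - 2 := by omega
  rw [e4, e2, e3] at h
  have hB : (-1 : (↥S) → ℂ) ^ (n - 1) *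
      (u S ⟨0, hn⟩ ^ n * u S i ^ (n - 1)) ∈ V S (2 * n - 2) := by
    refine neg_pow_mul_mem S ?_
    have h2 := pow_mul_mem S (i := i) (le_rfl : n - 1 ≤ n - 1) (r2 S hn H)
    have e5 : n - 1 + (n - 1) = 2 * n - 2 := by omega
    rw [e5] at h2
    have : u S ⟨0, hn⟩ ^ n * u S i ^ (n - 1) =
        u S i ^ (n - 1) * u S ⟨0, hn⟩ ^ n := by ring
    rw [this]
    exact h2
  have : u S i ^ (2 * n - 1) =
      (u S i ^ (2 * n - 1) + (-1 : (↥S) → ℂ) ^ (n - 1) *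
        (u S ⟨0, hn⟩ ^ n * u S i ^ (n - 1)))
      - (-1 : (↥S) → ℂ) ^ (n - 1) *
        (u S ⟨0, hn⟩ ^ n * u S i ^ (n - 1)) := by ring
  rw [this]
  exact Submodule.sub_mem _ h hB

lemma r5 : ∀ d : ℕ, V S d ≤ V S (n * (2 * n - 2)) := by
  intro d
  induction d with
  | zero => exact V_mono S (Nat.zero_le _)
  | succ e ih =>
    rw [V, Submodule.span_le]
    rintro f ⟨k, hk, rfl⟩
    simp only [Set.mem_setOf_eq] at hk
    by_cases hD : ∑ t, k t ≤ n * (2 * n - 2)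
    · exact mon_mem S hD
    · push_neg at hD
      have hex : ∃ i : Fin n, 2 * n - 1 ≤ k i := by
        by_contra hc
        push_neg at hc
        have : ∑ t, k t ≤ ∑ _t : Fin n, (2 * n - 2) :=
          Finset.sum_le_sum fun t _ => by have := hc t; omega
        rw [Finset.sum_const, Finset.card_univ, Fintype.card_fin,
          smul_eq_mul] at this
        omega
      obtain ⟨i, hi⟩ := hex
      set k' : Fin n → ℕ := fun t => k t - (if t = i then 2 * n - 1 else 0) with hk'
      have hsum : ∑ t, k' t + (2 * n - 1) = ∑ t, k t := by
        have : ∑ t, (if t = i then 2 * n - 1 else 0) = 2 * n - 1 := by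
          simp [Finset.sum_ite_eq']
        rw [← this, ← Finset.sum_add_distrib]
        refine Finset.sum_congr rfl fun t _ => ?_
        by_cases ht : t = i
        · subst ht; simp [hk', hi]
        · simp [hk', ht]
      have hmoneq : mon S k = mon S k' * u S i ^ (2 * n - 1) := by
        have hkk : k = fun t => k' t + (if t = i then 2 * n - 1 else 0) := by
          funext t
          by_cases ht : t = i
          · subst ht; simp [hk', hi]
          · simp [hk', ht]
        conv_lhs => rw [hkk]
        rw [mon_add, pow_eq_mon]
      rw [hmoneq]
      have hmem : mon S k' * u S i ^ (2 * n - 1) ∈ V S (2 * n - 2 + ∑ t, k' t) :=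
        mul_mem_V S le_rfl (r4 S hn H i)
      refine ih (V_mono S ?_ hmem)
      omega

lemma coord_finite (i : Fin n) :
    ∃ A : Set ℂ, A.Finite ∧ ∀ x ∈ S, x i ∈ A := by
  classical
  set D := n * (2 * n - 2) with hD
  have hfinset : ({k : Fin n → ℕ | ∑ t, k t ≤ D}).Finite := by
    refine Set.Finite.subset (Set.Finite.pi (fun _ : Fin n => Set.finite_Iic D)) ?_
    intro k hk
    refine Set.mem_pi.mpr fun t _ => ?_
    exact le_trans (Finset.single_le_sum (fun j _ => Nat.zero_le _)
      (Finset.mem_univ t)) hk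
  have hfin : FiniteDimensional ℂ (V S D) :=
    FiniteDimensional.span_of_finite ℂ (hfinset.image (mon S))
  set N := Module.finrank ℂ (V S D) with hN
  have hpow : ∀ m : ℕ, u S i ^ m ∈ V S D := fun m =>
    r5 S hn H m (pow_mem S le_rfl)
  set v : Fin (N + 1) → (V S D) := fun j => ⟨u S i ^ (j : ℕ), hpow j⟩ with hv
  have hnli : ¬ LinearIndependent ℂ v := by
    intro hli
    have h1 := hli.fintype_card_le_finrank
    rw [Fintype.card_fin] at h1
    omega
  obtain ⟨c, hc0, j0, hj0⟩ := Fintype.not_linearIndependent_iff.mp hnli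
  have hre : ∑ j : Fin (N + 1), c j • u S i ^ (j : ℕ) = 0 := by
    have h2 := congrArg (Submodule.subtype (V S D)) hc0
    simpa [hv, map_sum] using h2
  set q : Polynomial ℂ := ∑ j : Fin (N + 1), Polynomial.C (c j) * Polynomial.X ^ (j : ℕ)
    with hq
  have hcoeff : q.coeff (j0 : ℕ) = c j0 := by
    rw [hq, Polynomial.finset_sum_coeff]
    rw [Finset.sum_eq_single j0]
    · simp [Polynomial.coeff_C_mul, Polynomial.coeff_X_pow]
    · intro b _ hb
      have hne : ((j0 : ℕ)) ≠ ((b : ℕ)) := fun hh => hb (Fin.val_injective hh.symm)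
      simp [Polynomial.coeff_C_mul, Polynomial.coeff_X_pow, hne]
    · simp
  have hqne : q ≠ 0 := by
    intro h
    rw [h, Polynomial.coeff_zero] at hcoeff
    exact hj0 hcoeff.symm
  refine ⟨{z | q.IsRoot z}, Polynomial.finite_setOf_isRoot hqne, ?_⟩
  intro x hx
  have h3 := congrFun hre ⟨x, hx⟩
  simp only [Finset.sum_apply, Pi.smul_apply, Pi.pow_apply, smul_eq_mul,
    Pi.zero_apply, u] at h3
  show q.IsRoot (x i)
  rw [hq, Polynomial.IsRoot, Polynomial.eval_finset_sum]
  simpa using h3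

theorem finite_of_H : S.Finite := by
  choose A hA hmem using coord_finite S hn H
  refine Set.Finite.subset (Set.Finite.pi hA) ?_
  intro x hx
  exact Set.mem_pi.mpr fun i _ => hmem i x hx

end Main

end UlamAux

lemma ulam_root_identity {n : ℕ} (x : Fin n → ℂ)
    (hx : ∀ j : Fin n, x j = (-1) ^ ((j : ℕ) + 1) *
      MvPolynomial.eval x (MvPolynomial.esymm (Fin n) ℂ ((j : ℕ) + 1)))
    (i : Fin n) :
    (x i) ^ n + ∑ j : Fin n, x j * (x i) ^ (n - ((j : ℕ) + 1)) = 0 := by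
  classical
  set s : Multiset ℂ := Multiset.map x Finset.univ.val with hs
  have hcard : Multiset.card s = n := by simp [hs]
  have hes : ∀ m : ℕ, Multiset.esymm s m =
      MvPolynomial.eval x (MvPolynomial.esymm (Fin n) ℂ m) := by
    intro m
    have h1 := MvPolynomial.aeval_esymm_eq_multiset_esymm (Fin n) ℂ m x
    rw [MvPolynomial.aeval_def, Algebra.algebraMap_self] at h1
    rw [← h1]
    rfl
  have hzero : ((s.map fun t => X - C t).prod).eval (x i) = 0 := by
    rw [Polynomial.eval_multiset_prod]
    refine Multiset.prod_eq_zero ?_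
    rw [Multiset.map_map]
    refine Multiset.mem_map.mpr ⟨x i, ?_, by simp⟩
    exact Multiset.mem_map.mpr ⟨i, Finset.mem_univ_val i, rfl⟩
  have hv := congrArg (Polynomial.eval (x i)) (Multiset.prod_X_sub_X_eq_sum_esymm s)
  rw [hzero, hcard, Polynomial.eval_finset_sum] at hv
  simp only [Polynomial.eval_mul, Polynomial.eval_pow, Polynomial.eval_neg,
    Polynomial.eval_one, Polynomial.eval_C, Polynomial.eval_X] at hv
  rw [Finset.sum_range_succ'] at hv
  have he0 : s.esymm 0 = 1 := by simp [Multiset.esymm]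
  simp only [he0, pow_zero, one_mul, mul_one, Nat.sub_zero] at hv
  rw [← Fin.sum_univ_eq_sum_range
    (fun m => (-1 : ℂ) ^ (m + 1) * (s.esymm (m + 1) * (x i) ^ (n - (m + 1))))] at hv
  have hterm : ∀ j : Fin n,
      (-1 : ℂ) ^ ((j : ℕ) + 1) * (s.esymm ((j : ℕ) + 1) * (x i) ^ (n - ((j : ℕ) + 1))) =
      x j * (x i) ^ (n - ((j : ℕ) + 1)) := by
    intro j
    rw [hes, ← mul_assoc, ← hx j]
  rw [Finset.sum_congr rfl fun j _ => hterm j] at hv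
  linear_combination -hv

/-- The set of fixed points of the Ulam map `T_n : ℂ^n → ℂ^n`,
`(T_n x)_j = (-1)^j σ_j(x)` (indices `j = 1, …, n`), is finite. -/
theorem ulam_fixed_points_finite (n : ℕ) :
    {x : Fin n → ℂ | ∀ j : Fin n,
      x j = (-1) ^ ((j : ℕ) + 1) *
        MvPolynomial.eval x (MvPolynomial.esymm (Fin n) ℂ ((j : ℕ) + 1))}.Finite := by
  rcases Nat.eq_zero_or_pos n with hn | hn
  · subst hn
    exact Set.subsingleton_of_subsingleton.finite
  · set S := {x : Fin n → ℂ | ∀ j : Fin n,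
      x j = (-1) ^ ((j : ℕ) + 1) *
        MvPolynomial.eval x (MvPolynomial.esymm (Fin n) ℂ ((j : ℕ) + 1))} with hS
    refine UlamAux.finite_of_H S hn ?_
    intro i
    funext p
    have hroot := ulam_root_identity (p : Fin n → ℂ) p.2 i
    simpa [UlamAux.u, Finset.sum_apply, Pi.pow_apply, Pi.mul_apply,
      Pi.add_apply, Pi.zero_apply] using hroot
end

section
/- For every natural number n, the set of tuples (x_1,…,x_n) ∈ ℂ^n satisfying the polynomial identity (X−x_1)(X−x_2)⋯(X−x_n) = X^n + x_1 X^{n−1} + x_2 X^{n−2} + ⋯ + x_{n−1} X + x_n in ℂ[X] is finite. -/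
/-!
Write the variables as `x₀, …, xₙ`. Every coordinate of a solution is a root of the Ulam
polynomial, so on the solution set `S` the coordinate functions `xᵢ : S → K` satisfy
`xᵢ ^ (n + 1) = -∑ⱼ xⱼ xᵢ ^ (n - j)`. These relations rewrite every monomial in the `xᵢ` as a
combination of monomials with all exponents at most `n`, decreasing the weighted degree
`2·deg₀ + 3·(degree in the other variables)`; the only term that does not decrease is
`x₀ ^ (n + 1)` itself when `i = 0`, and it is absorbed by halving. Hence the powers of each `xᵢ`
span a finite-dimensional space, so each `xᵢ` is algebraic over `K` and takes only finitely many
values on `S`.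
-/

open Polynomial

theorem Polynomial.isRoot_of_prod_X_sub_C_eq {R ι : Type*} [CommRing R] [Fintype ι] {x : ι → R}
    {p : R[X]} (hp : ∏ i, (X - C (x i)) = p) (i : ι) : p.IsRoot (x i) := by
  rw [← hp, IsRoot, eval_prod]
  exact Finset.prod_eq_zero (Finset.mem_univ i) (by simp)

theorem Set.finite_of_isAlgebraic_coord {K ι : Type*} [Field K] [Finite ι] {S : Set (ι → K)}
    (h : ∀ i, IsAlgebraic K fun s : S => (s : ι → K) i) : S.Finite := by
  choose q hq0 hq using h
  refine (Set.Finite.pi (t := fun i => {z | (q i).IsRoot z}) fun i =>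
    finite_setOfPred_isRoot (hq0 i)).subset fun s hs => Set.mem_pi.mpr fun i _ => ?_
  simpa [aeval_pi_apply₂] using congrFun (hq i) ⟨s, hs⟩

theorem exists_eq_add_single {ι : Type*} [DecidableEq ι] {α : ι → ℕ} {i : ι} {k : ℕ}
    (hk : k ≤ α i) : ∃ γ : ι → ℕ, α = γ + Pi.single i k := by
  refine ⟨α - Pi.single i k, funext fun j => ?_⟩
  rcases eq_or_ne j i with rfl | hj
  · simp only [Pi.add_apply, Pi.sub_apply, Pi.single_eq_same]
    omega
  · simp [hj]

namespace Ulam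

section Monomial

variable {ι A : Type*} [Fintype ι] [CommRing A] (x : ι → A)

def monomial (α : ι → ℕ) : A := ∏ i, x i ^ α i

theorem monomial_add (α β : ι → ℕ) : monomial x (α + β) = monomial x α * monomial x β := by
  simp only [monomial, Pi.add_apply, pow_add, Finset.prod_mul_distrib]

theorem monomial_single [DecidableEq ι] (i : ι) (k : ℕ) :
    monomial x (Pi.single i k) = x i ^ k := by
  rw [monomial, Finset.prod_eq_single i (fun j _ hj => by simp [hj]) (by simp), Pi.single_eq_same]

variable (K : Type*) [Field K] [Algebra K A]

def reducedSpan (N : ℕ) : Submodule K A :=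
  Submodule.span K (Set.range fun b : ι → Fin N => monomial x fun i => b i)

theorem reducedSpan_fg (N : ℕ) : (reducedSpan x K N).FG :=
  Submodule.fg_span (Set.finite_range _)

end Monomial

section Reduction

variable {K A : Type*} [Field K] [CommRing A] [Algebra K A] {n : ℕ} (x : Fin (n + 1) → A)

/-- `x 0` gets the smaller weight because reducing `x i ^ (n + 1)` trades a factor `x i`
for a factor `x 0`. -/
def weight (α : Fin (n + 1) → ℕ) : ℕ := ∑ i, (if i = 0 then 2 else 3) * α i

theorem weight_add (α β : Fin (n + 1) → ℕ) : weight (α + β) = weight α + weight β := by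
  simp only [weight, Pi.add_apply, mul_add, Finset.sum_add_distrib]

theorem weight_single (i : Fin (n + 1)) (k : ℕ) :
    weight (Pi.single i k) = (if i = 0 then 2 else 3) * k := by
  rw [weight, Finset.sum_eq_single i (fun j _ hj => by simp [hj]) (by simp), Pi.single_eq_same]

theorem weight_lt (γ : Fin (n + 1) → ℕ) {i j : Fin (n + 1)} (hij : i ≠ 0 ∨ j ≠ 0) :
    weight (γ + Pi.single j 1 + Pi.single i (n - j)) < weight (γ + Pi.single i (n + 1)) := by
  simp only [weight_add, weight_single]
  have hj := j.is_le
  simp only [ne_eq, ← Fin.val_eq_zero_iff] at hij ⊢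
  split_ifs <;> omega

variable (hx : ∀ i, x i ^ (n + 1) + ∑ j : Fin (n + 1), x j * x i ^ (n - j) = 0)
include hx

theorem monomial_add_single_eq (γ : Fin (n + 1) → ℕ) (i : Fin (n + 1)) :
    monomial x (γ + Pi.single i (n + 1)) =
      -∑ j : Fin (n + 1), monomial x (γ + Pi.single j 1 + Pi.single i (n - j)) := by
  simp only [monomial_add, monomial_single, pow_one, mul_assoc, ← Finset.mul_sum]
  linear_combination monomial x γ * hx i

theorem monomial_mem_reducedSpan (h2 : (2 : K) ≠ 0) (α : Fin (n + 1) → ℕ) :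
    monomial x α ∈ reducedSpan x K (n + 1) := by
  induction hw : weight α using Nat.strong_induction_on generalizing α with
  | _ w ih =>
  by_cases hred : ∀ i, α i < n + 1
  · exact Submodule.subset_span ⟨fun i => ⟨α i, hred i⟩, rfl⟩
  push Not at hred
  obtain ⟨i, hi⟩ := hred
  obtain ⟨γ, rfl⟩ := exists_eq_add_single hi
  have hlower : ∀ j : Fin (n + 1), i ≠ 0 ∨ j ≠ 0 →
      monomial x (γ + Pi.single j 1 + Pi.single i (n - j)) ∈ reducedSpan x K (n + 1) :=
    fun j hij => ih _ (hw ▸ weight_lt γ hij) _ rfl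
  have htail : ∑ j : Fin n, monomial x (γ + Pi.single j.succ 1 + Pi.single i (n - j.succ)) ∈
      reducedSpan x K (n + 1) :=
    Submodule.sum_mem _ fun j _ => hlower _ (.inr j.succ_ne_zero)
  have hsplit := monomial_add_single_eq x hx γ i
  rw [Fin.sum_univ_succ] at hsplit
  rcases eq_or_ne i 0 with rfl | hi0
  · -- the `j = 0` term of the reduction of `x 0 ^ (n + 1)` is the monomial itself
    have hdouble : (2 : K) • monomial x (γ + Pi.single 0 (n + 1)) = -∑ j : Fin n,
        monomial x (γ + Pi.single j.succ 1 + Pi.single 0 (n - j.succ)) := by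
      rw [Fin.val_zero, Nat.sub_zero, add_assoc, ← Pi.single_add, add_comm 1 n] at hsplit
      rw [two_smul]
      linear_combination hsplit
    exact (Submodule.smul_mem_iff _ h2).mp (hdouble ▸ neg_mem htail)
  · rw [hsplit]
    exact neg_mem (add_mem (hlower 0 (.inl hi0)) htail)

theorem isIntegral (h2 : (2 : K) ≠ 0) (i : Fin (n + 1)) : IsIntegral K (x i) := by
  refine IsIntegral.of_mem_of_fg (Algebra.adjoin K {x i}) ((reducedSpan_fg x K (n + 1)).of_le ?_)
    _ (Algebra.self_mem_adjoin_singleton K _)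
  rw [Algebra.adjoin_eq_span, Submonoid.closure_singleton_eq, Submodule.span_le]
  intro a ha
  obtain ⟨k, rfl⟩ := (Submonoid.mem_powers_iff _ _).mp ha
  have hk := monomial_mem_reducedSpan x hx h2 (Pi.single i k)
  rwa [monomial_single] at hk

end Reduction

theorem finite_of_forall_pow_add_sum_eq_zero {K : Type*} [Field K] {n : ℕ} (h2 : (2 : K) ≠ 0)
    {S : Set (Fin (n + 1) → K)}
    (hS : ∀ s ∈ S, ∀ i, s i ^ (n + 1) + ∑ j : Fin (n + 1), s j * s i ^ (n - j) = 0) :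
    S.Finite :=
  Set.finite_of_isAlgebraic_coord fun i =>
    (isIntegral (fun i (s : S) => (s : Fin (n + 1) → K) i)
      (fun i => funext fun s => by simpa using hS s s.2 i) h2 i).isAlgebraic

end Ulam

open Polynomial in
/-- The set of tuples `(x_1, …, x_n) ∈ ℂ^n` with
`(X - x_1)⋯(X - x_n) = X^n + x_1 X^(n-1) + ⋯ + x_(n-1) X + x_n` is finite. -/
theorem ulam_root_tuples_finite (n : ℕ) :
    {x : Fin n → ℂ | ∏ i : Fin n, (X - C (x i)) =
      X ^ n + ∑ j : Fin n, C (x j) * X ^ (n - ((j : ℕ) + 1))}.Finite := by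
  cases n with
  | zero => exact Set.toFinite _
  | succ n =>
    refine Ulam.finite_of_forall_pow_add_sum_eq_zero two_ne_zero fun s hs i => ?_
    simpa [Nat.add_sub_add_right, eval_finsetSum] using isRoot_of_prod_X_sub_C_eq hs i
end

section
/- Let n be a natural number and let S ⊆ ℂ^n be the common zero set of a family of multivariate polynomials in n variables over ℂ (a Zariski-closed subset of ℂ^n). If S is bounded (with respect to the standard norm on ℂ^n), then S is finite. Equivalently, every infinite Zariski-closed subset of ℂ^n is unbounded, i.e., contains an unbounded sequence of points. -/
/-!
For each coordinate `i`, let `a` be the class of `X i` in `A = ℂ[X] ⧸ I`, where `S = V(I)`. By the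
weak Nullstellensatz `a - c` is a unit of `A` whenever `c` is not the `i`-th coordinate of a point
of `S`, which, `S` being bounded, happens for uncountably many `c`. Were `a` transcendental, the
inverses `(a - c)⁻¹` would be linearly independent, which is impossible in the countably
dimensional space `A`. So `a` is algebraic, a nonzero polynomial vanishes on the `i`-th coordinates
of `S`, and `S` lies in a finite grid.
-/

open Cardinal

open Polynomial in
theorem Transcendental.linearIndependent_inverse_sub {F A : Type*} [Field F] [CommRing A]
    [Algebra F A] {a : A} (ha : Transcendental F a) {T : Set F}
    (hT : ∀ c ∈ T, IsUnit (a - algebraMap F A c)) :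
    LinearIndependent F fun c : T ↦ Ring.inverse (a - algebraMap F A c) := by
  classical
  set b : T → A := fun c ↦ a - algebraMap F A c
  rw [linearIndependent_iff']
  intro s g hsum i hi
  let p : F[X] := ∑ k ∈ s, C (g k) * ∏ j ∈ s.erase k, (X - C (j : F))
  -- clearing denominators turns the relation into a polynomial vanishing at `a`
  have hpa : Polynomial.aeval a p = 0 :=
    calc Polynomial.aeval a p = ∑ k ∈ s, algebraMap F A (g k) * ∏ j ∈ s.erase k, b j := by
          simp [p, b]
      _ = ∑ k ∈ s, g k • Ring.inverse (b k) * ∏ j ∈ s, b j :=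
          Finset.sum_congr rfl fun k hk ↦ by
            rw [← Finset.mul_prod_erase s b hk, smul_mul_assoc,
              Ring.inverse_mul_cancel_left _ _ (hT k k.2), Algebra.smul_def]
      _ = 0 := by simp only [b, ← Finset.sum_mul, hsum, zero_mul]
  have hp : p.eval (i : F) = g i * ∏ j ∈ s.erase i, ((i : F) - j) := by
    simp only [p, eval_finsetSum, eval_mul, eval_C, eval_prod, eval_sub, eval_X]
    refine Finset.sum_eq_single i (fun k _ hki ↦ ?_) (absurd hi)
    rw [Finset.prod_eq_zero (Finset.mem_erase.mpr ⟨Ne.symm hki, hi⟩) (sub_self _), mul_zero]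
  have hprod : ∏ j ∈ s.erase i, ((i : F) - j) ≠ 0 :=
    Finset.prod_ne_zero_iff.mpr fun j hj ↦
      sub_ne_zero.mpr fun h ↦ Finset.ne_of_mem_erase hj (Subtype.ext h).symm
  rw [transcendental_iff.mp ha p hpa, eval_zero] at hp
  exact (mul_eq_zero.mp hp.symm).resolve_right hprod

theorem isAlgebraic_of_not_countable_isUnit_sub {F A : Type*} [Field F] [CommRing A]
    [Algebra F A] (hA : Module.rank F A ≤ ℵ₀) {a : A} {T : Set F} (hT : ¬ T.Countable)
    (hunit : ∀ c ∈ T, IsUnit (a - algebraMap F A c)) : IsAlgebraic F a := by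
  by_contra ha
  have hle := (Transcendental.linearIndependent_inverse_sub ha hunit).cardinal_lift_le_rank
  rw [← le_aleph0_iff_set_countable, ← lift_le_aleph0] at hT
  exact hT (hle.trans (lift_le_aleph0.mpr hA))

theorem Bornology.IsBounded.not_countable_compl {E : Type*} [NormedAddCommGroup E]
    [NormedSpace ℝ E] [Nontrivial E] {s : Set E} (hs : IsBounded s) : ¬ sᶜ.Countable := by
  intro hc
  have hdense : Dense s := compl_compl s ▸ hc.dense_compl ℝ
  exact NormedSpace.unbounded_univ ℝ E (hdense.closure_eq ▸ hs.closure)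

namespace MvPolynomial

variable {k σ : Type*} [Field k]

theorem rank_quotient_le_aleph0 [Countable σ] (I : Ideal (MvPolynomial σ k)) :
    Module.rank k (MvPolynomial σ k ⧸ I) ≤ ℵ₀ :=
  calc Module.rank k (MvPolynomial σ k ⧸ I)
      ≤ Module.rank k (MvPolynomial σ k) :=
        LinearMap.rank_le_of_surjective (Ideal.Quotient.mkₐ k I).toLinearMap
          (Ideal.Quotient.mkₐ_surjective k I)
    _ ≤ ℵ₀ := by
        rw [rank_eq_lift]
        exact lift_le_aleph0.mpr mk_le_aleph0

theorem isUnit_mk_of_forall_aeval_ne_zero [IsAlgClosed k] [Finite σ]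
    {I : Ideal (MvPolynomial σ k)} {p : MvPolynomial σ k}
    (hp : ∀ x ∈ zeroLocus k I, aeval x p ≠ 0) : IsUnit (Ideal.Quotient.mk I p) := by
  by_contra hnu
  obtain ⟨M, hM, hpM⟩ := exists_max_ideal_of_mem_nonunits hnu
  have hmax : (M.comap (Ideal.Quotient.mk I)).IsMaximal :=
    Ideal.comap_isMaximal_of_surjective _ Ideal.Quotient.mk_surjective
  obtain ⟨x, hx⟩ := eq_vanishingIdeal_singleton_of_isMaximal k hmax
  have hmem : ∀ q, Ideal.Quotient.mk I q ∈ M → aeval x q = 0 := fun q hq ↦ by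
    rw [← mem_vanishingIdeal_singleton_iff, ← hx]
    exact hq
  refine hp x (fun q hq ↦ hmem q ?_) (hmem p hpM)
  rw [Ideal.Quotient.eq_zero_iff_mem.mpr hq]
  exact M.zero_mem

theorem finite_image_aeval_zeroLocus_of_isAlgebraic {I : Ideal (MvPolynomial σ k)}
    {q : MvPolynomial σ k} (hq : IsAlgebraic k (Ideal.Quotient.mk I q)) :
    ((fun x ↦ aeval x q) '' zeroLocus k I).Finite := by
  obtain ⟨f, hf0, hf⟩ := hq
  have hfI : Polynomial.aeval q f ∈ I := by
    rw [← Ideal.Quotient.eq_zero_iff_mem, ← Ideal.Quotient.mkₐ_eq_mk k,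
      ← Polynomial.aeval_algHom_apply, Ideal.Quotient.mkₐ_eq_mk, hf]
  refine (Polynomial.finite_setOfPred_isRoot hf0).subset ?_
  rintro _ ⟨x, hx, rfl⟩
  rw [Set.mem_ofPred_eq, Polynomial.IsRoot, ← Polynomial.coe_aeval_eq_eval,
    Polynomial.aeval_algHom_apply]
  exact hx _ hfI

theorem isAlgebraic_mk_of_not_countable_compl_image [IsAlgClosed k] [Finite σ]
    {I : Ideal (MvPolynomial σ k)} {q : MvPolynomial σ k}
    (hq : ¬ ((fun x ↦ aeval x q) '' zeroLocus k I)ᶜ.Countable) :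
    IsAlgebraic k (Ideal.Quotient.mk I q) := by
  refine isAlgebraic_of_not_countable_isUnit_sub (rank_quotient_le_aleph0 I) hq fun c hc ↦ ?_
  have hunit := isUnit_mk_of_forall_aeval_ne_zero (I := I) (p := q - C c) fun x hx ↦ by
    rw [map_sub, aeval_C, Algebra.algebraMap_self_apply, sub_ne_zero]
    exact fun h ↦ hc ⟨x, hx, h⟩
  rwa [map_sub] at hunit

end MvPolynomial

/-- A bounded Zariski-closed subset of `ℂ^n` (the common zero set of a family of
multivariate polynomials) is finite. -/
theorem bounded_zariski_closed_finite (n : ℕ) (F : Set (MvPolynomial (Fin n) ℂ))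
    (S : Set (Fin n → ℂ)) (hS : S = {x : Fin n → ℂ | ∀ p ∈ F, MvPolynomial.eval x p = 0})
    (hbdd : Bornology.IsBounded S) : S.Finite := by
  have hzero : S = MvPolynomial.zeroLocus ℂ (Ideal.span F) := by
    simp only [hS, MvPolynomial.zeroLocus_span, MvPolynomial.aeval_eq_eval]
  have hcoord (i : Fin n) : (Function.eval i '' S).Finite := by
    have hbdd_i := (LipschitzWith.eval i).isBounded_image hbdd
    have halg : IsAlgebraic ℂ (Ideal.Quotient.mk (Ideal.span F) (MvPolynomial.X i)) :=
      MvPolynomial.isAlgebraic_mk_of_not_countable_compl_image <| by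
        simpa only [MvPolynomial.aeval_X, ← hzero] using hbdd_i.not_countable_compl
    simpa only [MvPolynomial.aeval_X, ← hzero] using
      MvPolynomial.finite_image_aeval_zeroLocus_of_isAlgebraic halg
  exact (Set.Finite.pi hcoord).subset (Set.subset_pi_eval_image _ S)
end

section
/- For every natural number n, the set of fixed points of the map T_n : ℂ^n → ℂ^n, (T_n(x))_j = (-1)^j σ_j(x_1,…,x_n), is bounded: there exists a real number R such that every tuple (x_1,…,x_n) ∈ ℂ^n satisfying x_j = (-1)^j σ_j(x_1,…,x_n) for all j has |x_i| ≤ R for all i. In particular, the roots of any Ulam polynomial of degree n are uniformly bounded in modulus. -/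
open MvPolynomial Finset

/-- evaluating `esymm` at a scaled point. -/
lemma eval_esymm_smul {n : ℕ} (c : ℂ) (x : Fin n → ℂ) (k : ℕ) :
    eval (c • x) (esymm (Fin n) ℂ k) = c ^ k * eval x (esymm (Fin n) ℂ k) := by
  simp only [esymm, map_sum, eval_prod, eval_X, Pi.smul_apply, smul_eq_mul, Finset.mul_sum]
  refine Finset.sum_congr rfl fun t ht => ?_
  rw [Finset.prod_mul_distrib, Finset.prod_const,
    (Finset.mem_powersetCard_univ.mp ht)]

/-- evaluating `esymm` as a sum over subsets. -/
lemma eval_esymm_eq {n : ℕ} (x : Fin n → ℂ) (k : ℕ) :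
    eval x (esymm (Fin n) ℂ k) = ∑ t ∈ Finset.powersetCard k Finset.univ, ∏ i ∈ t, x i := by
  simp [esymm, eval_prod]

lemma prod_sub_eq_sum {n : ℕ} (y : Fin n → ℂ) (z : ℂ) :
    ∏ i, (z - y i) =
      ∑ j ∈ Finset.range (n + 1),
        (-1) ^ j * eval y (esymm (Fin n) ℂ j) * z ^ (n - j) := by
  have h := Multiset.prod_X_sub_X_eq_sum_esymm (Finset.univ.val.map y)
  have hcard : Multiset.card (Finset.univ.val.map y) = n := by simp
  have := congrArg (Polynomial.eval z) h
  rw [Polynomial.eval_multiset_prod, Multiset.map_map] at this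
  simp only [hcard] at this
  rw [Multiset.map_map] at this
  have hl : (Multiset.map ((Polynomial.eval z ∘ fun t => Polynomial.X - Polynomial.C t) ∘ y)
      Finset.univ.val).prod = ∏ i, (z - y i) := by
    simp [Finset.prod]
  rw [← hl, this]
  rw [Polynomial.eval_finset_sum]
  refine Finset.sum_congr rfl fun j hj => ?_
  have : (Finset.univ.val.map y).esymm j = eval y (esymm (Fin n) ℂ j) := by
    rw [eval_esymm_eq, Finset.esymm_map_val]
  rw [Polynomial.eval_mul, Polynomial.eval_mul, Polynomial.eval_pow, Polynomial.eval_neg,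
    Polynomial.eval_one, Polynomial.eval_C, Polynomial.eval_pow, Polynomial.eval_X, this,
    mul_assoc]

lemma leading_forms_zero {n : ℕ} (hn : 0 < n) (y : Fin n → ℂ)
    (h1 : y ⟨0, hn⟩ + eval y (esymm (Fin n) ℂ 1) = 0)
    (h2 : ∀ j, 2 ≤ j → j ≤ n → eval y (esymm (Fin n) ℂ j) = 0) :
    y = 0 := by
  set c : ℂ := eval y (esymm (Fin n) ℂ 1) with hc
  -- every coordinate is 0 or c
  have hroot : ∀ i, y i = 0 ∨ y i = c := by
    intro i
    have h := (prod_sub_eq_sum y (y i)).symm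
    rw [Finset.prod_eq_zero (Finset.mem_univ i) (by ring)] at h
    have hins : Finset.range (n + 1) = insert 0 (insert 1 (Finset.Ico 2 (n + 1))) := by
      ext j; simp only [Finset.mem_range, Finset.mem_insert, Finset.mem_Ico]; omega
    rw [hins, Finset.sum_insert (by simp), Finset.sum_insert (by simp),
      Finset.sum_eq_zero (fun j hj => by
        rw [h2 j (Finset.mem_Ico.mp hj).1 (by have := (Finset.mem_Ico.mp hj).2; omega)]
        ring)] at h
    simp only [pow_zero, pow_one, one_mul, esymm_zero, map_one, add_zero, Nat.sub_zero] at h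
    have heq : y i ^ n = c * y i ^ (n - 1) := by
      rw [← hc] at h; linear_combination h
    have hfac : y i ^ (n - 1) * (y i - c) = 0 := by
      have : y i ^ (n - 1) * (y i - c) = y i ^ ((n - 1) + 1) - c * y i ^ (n - 1) := by
        rw [pow_succ]; ring
      rw [this, Nat.sub_add_cancel hn, heq, sub_self]
    rcases mul_eq_zero.mp hfac with h' | h'
    · exact Or.inl (pow_eq_zero_iff'.mp h').1
    · exact Or.inr (sub_eq_zero.mp h')
  have h0 : c = 0 := by
    rcases hroot ⟨0, hn⟩ with h | h
    · rw [h, zero_add] at h1; exact h1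
    · rw [h] at h1
      have : (2 : ℂ) * c = 0 := by ring_nf; linear_combination h1
      simpa using this
  funext i
  rcases hroot i with h | h
  · simp [h]
  · simp [h, h0]

/-- The set of fixed points of the Ulam map `T_n` is bounded: there is `R : ℝ` such
that every `x ∈ ℂ^n` with `x_j = (-1)^j σ_j(x)` for all `j = 1, …, n` satisfies
`‖x_i‖ ≤ R` for all `i`. -/
theorem ulam_fixed_points_bounded (n : ℕ) :
    ∃ R : ℝ, ∀ x : Fin n → ℂ,
      (∀ j : Fin n,
        x j = (-1) ^ ((j : ℕ) + 1) *
          MvPolynomial.eval x (MvPolynomial.esymm (Fin n) ℂ ((j : ℕ) + 1))) →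
      ∀ i : Fin n, ‖x i‖ ≤ R := by
  rcases Nat.eq_zero_or_pos n with hn | hn
  · subst hn; exact ⟨0, fun x _ i => i.elim0⟩
  haveI : Nonempty (Fin n) := ⟨⟨0, hn⟩⟩
  set φ : (Fin n → ℂ) → ℝ := fun y =>
    ‖y ⟨0, hn⟩ + eval y (esymm (Fin n) ℂ 1)‖ +
      ∑ j ∈ Finset.Icc 2 n, ‖eval y (esymm (Fin n) ℂ j)‖ with hφ
  have hcont : Continuous φ := by
    apply Continuous.add
    · exact ((continuous_apply _).add (MvPolynomial.continuous_eval _)).norm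
    · exact continuous_finset_sum _ fun j _ => (MvPolynomial.continuous_eval _).norm
  have hsne : (Metric.sphere (0 : Fin n → ℂ) 1).Nonempty := by
    refine ⟨fun _ => 1, ?_⟩
    rw [mem_sphere_zero_iff_norm]
    rw [pi_norm_const (1 : ℂ)]
    simp
  obtain ⟨y₀, hy₀s, hy₀min⟩ :=
    (isCompact_sphere (0 : Fin n → ℂ) 1).exists_isMinOn hsne hcont.continuousOn
  set δ := φ y₀ with hδ
  have hsumnn : (0:ℝ) ≤ ∑ j ∈ Finset.Icc 2 n, ‖eval y₀ (esymm (Fin n) ℂ j)‖ :=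
    Finset.sum_nonneg fun _ _ => norm_nonneg _
  have hδpos : 0 < δ := by
    rcases (add_nonneg (norm_nonneg (y₀ ⟨0, hn⟩ + eval y₀ (esymm (Fin n) ℂ 1))) hsumnn).lt_or_eq
      with h | h
    · exact h
    · exfalso
      obtain ⟨ha, hb⟩ := (add_eq_zero_iff_of_nonneg
        (norm_nonneg (y₀ ⟨0, hn⟩ + eval y₀ (esymm (Fin n) ℂ 1))) hsumnn).mp h.symm
      have hzero : y₀ = 0 := by
        refine leading_forms_zero hn y₀ (norm_eq_zero.mp ha) ?_
        intro j hj2 hjn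
        exact norm_eq_zero.mp <|
          (Finset.sum_eq_zero_iff_of_nonneg (fun _ _ => norm_nonneg _)).mp hb j
            (Finset.mem_Icc.mpr ⟨hj2, hjn⟩)
      have := mem_sphere_zero_iff_norm.mp hy₀s
      rw [hzero] at this; simp at this
  refine ⟨max 1 (n / δ), fun x hx i => ?_⟩
  have hxi : ‖x i‖ ≤ ‖x‖ := norm_le_pi_norm x i
  by_contra hcon
  push_neg at hcon
  set M := ‖x‖ with hMdef
  have hM1 : 1 < M := lt_of_le_of_lt (le_max_left _ _) (lt_of_lt_of_le hcon hxi)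
  have hMn : (n : ℝ) / δ < M := lt_of_le_of_lt (le_max_right _ _) (lt_of_lt_of_le hcon hxi)
  have hM0 : (0:ℝ) < M := by linarith
  set c : ℂ := ((M : ℝ) : ℂ)⁻¹ with hcdef
  have hcnorm : ‖c‖ = M⁻¹ := by
    rw [hcdef, norm_inv, Complex.norm_real, Real.norm_of_nonneg hM0.le]
  set y : Fin n → ℂ := c • x with hydef
  have hys : y ∈ Metric.sphere (0 : Fin n → ℂ) 1 := by
    rw [mem_sphere_zero_iff_norm, hydef, norm_smul, hcnorm, ← hMdef,
      inv_mul_cancel₀ hM0.ne']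
  have hmin : δ ≤ φ y := hy₀min hys
  -- first term of φ y vanishes
  have hterm1 : y ⟨0, hn⟩ + eval y (esymm (Fin n) ℂ 1) = 0 := by
    have h0 : x ⟨0, hn⟩ = -eval x (esymm (Fin n) ℂ 1) := by
      simpa using hx ⟨0, hn⟩
    rw [hydef, Pi.smul_apply, eval_esymm_smul, smul_eq_mul, pow_one, h0]
    ring
  -- the other terms are small
  have hterm2 : ∀ j ∈ Finset.Icc 2 n, ‖eval y (esymm (Fin n) ℂ j)‖ ≤ M⁻¹ := by
    intro j hj
    obtain ⟨hj2, hjn⟩ := Finset.mem_Icc.mp hj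
    have hfin : j - 1 < n := by omega
    have hco : (j - 1) + 1 = j := by omega
    have hxj : x ⟨j - 1, hfin⟩ = (-1) ^ j * eval x (esymm (Fin n) ℂ j) := by
      simpa [hco] using hx ⟨j - 1, hfin⟩
    have hevx : ‖eval x (esymm (Fin n) ℂ j)‖ ≤ M := by
      have hsq : ((-1 : ℂ)) ^ j * (-1 : ℂ) ^ j = 1 := by
        rw [← pow_add, show j + j = 2 * j by ring, pow_mul]; norm_num
      have : eval x (esymm (Fin n) ℂ j) = (-1 : ℂ) ^ j * x ⟨j - 1, hfin⟩ := by
        rw [hxj, ← mul_assoc, hsq, one_mul]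
      rw [this, norm_mul, norm_pow, norm_neg, norm_one, one_pow, one_mul]
      exact norm_le_pi_norm x _
    have : eval y (esymm (Fin n) ℂ j) = c ^ j * eval x (esymm (Fin n) ℂ j) := by
      rw [hydef, eval_esymm_smul]
    rw [this, norm_mul, norm_pow, hcnorm]
    calc M⁻¹ ^ j * ‖eval x (esymm (Fin n) ℂ j)‖ ≤ M⁻¹ ^ 2 * M := by
          apply mul_le_mul _ hevx (norm_nonneg _) (by positivity)
          exact pow_le_pow_of_le_one (by positivity) (inv_le_one_of_one_le₀ hM1.le) hj2
      _ = M⁻¹ := by field_simp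
  have hφy : φ y ≤ (n : ℝ) * M⁻¹ := by
    have hsum : ∑ j ∈ Finset.Icc 2 n, ‖eval y (esymm (Fin n) ℂ j)‖ ≤
        ((Finset.Icc 2 n).card : ℝ) * M⁻¹ := by
      have := Finset.sum_le_card_nsmul (Finset.Icc 2 n)
        (fun j => ‖eval y (esymm (Fin n) ℂ j)‖) M⁻¹ hterm2
      simpa [nsmul_eq_mul] using this
    have hcard : ((Finset.Icc 2 n).card : ℝ) ≤ (n : ℝ) := by
      have : (Finset.Icc 2 n).card = n - 1 := by rw [Nat.card_Icc]; omega
      rw [this]; exact_mod_cast Nat.sub_le _ _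
    have heq : φ y = ∑ j ∈ Finset.Icc 2 n, ‖eval y (esymm (Fin n) ℂ j)‖ := by
      show ‖y ⟨0, hn⟩ + eval y (esymm (Fin n) ℂ 1)‖ +
          ∑ j ∈ Finset.Icc 2 n, ‖eval y (esymm (Fin n) ℂ j)‖ = _
      rw [hterm1, norm_zero, zero_add]
    rw [heq]
    calc _ ≤ ((Finset.Icc 2 n).card : ℝ) * M⁻¹ := hsum
      _ ≤ (n : ℝ) * M⁻¹ := by
          apply mul_le_mul_of_nonneg_right hcard (by positivity)
  have hlt : (n : ℝ) * M⁻¹ < δ := by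
    rw [← div_eq_mul_inv, div_lt_iff₀ hM0]
    have := (div_lt_iff₀ hδpos).mp hMn
    linarith [mul_comm M δ]
  exact absurd (hmin.trans hφy) (not_le.mpr hlt)
end
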